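/- arXiv:2109.03117 — 8 statements merged into one kernel-verified Lean document; each statement's English description precedes it below -/
import Mathlib

section
/- For all nonnegative integers m \ge 1 and commutative-ring elements X, Y with X \ne Y (or working formally), (X^m - Y^m)/(X - Y) = \sum_{0 \le k \le (m-1)/2} (-1)^k * binom(m-1-k, k) * (XY)^k * (X+Y)^{m-1-2k}. -/
/-!
The sum is the Dickson polynomial of the second kind `E_n(s, p) = dickson 2 p n` evaluated at
`s = X + Y`, `p = X * Y`, with `n = m - 1`. Both `X ^ (n + 1) - Y ^ (n + 1)` and
`(X - Y) * E_n(X + Y, X * Y)` satisfy `u (n + 2) = (X + Y) * u (n + 1) - X * Y * u n` with the same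
initial values; that the binomial sum satisfies the same recurrence as `E_n` is Pascal's rule
`C(n + 1 - k, k + 1) = C(n - k, k) + C(n - k, k + 1)`, applied termwise.
-/

open Finset Polynomial

namespace GirardWaring

variable {R : Type*} [CommRing R]

def term (s p : R) (n k : ℕ) : R :=
  (-1) ^ k * (n - k).choose k * p ^ k * s ^ (n - 2 * k)

variable (s p : R)

lemma term_eq_zero {n k : ℕ} (h : n < 2 * k) : term s p n k = 0 := by
  simp [term, Nat.choose_eq_zero_of_lt (show n - k < k by omega)]

lemma sum_range_term_eq {n N : ℕ} (hN : n / 2 < N) :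
    ∑ k ∈ range N, term s p n k = ∑ k ∈ range (n / 2 + 1), term s p n k :=
  (sum_subset (fun k hk => by simp at hk ⊢; omega) fun k _ hk =>
    term_eq_zero s p (by simp at hk; omega)).symm

lemma term_add_two_succ (n k : ℕ) :
    term s p (n + 2) (k + 1) = s * term s p (n + 1) (k + 1) - p * term s p n k := by
  rcases lt_trichotomy n (2 * k) with h | rfl | h
  · simp only [term_eq_zero s p h, term_eq_zero s p (show n + 1 < 2 * (k + 1) by omega),
      term_eq_zero s p (show n + 2 < 2 * (k + 1) by omega)]
    ring
  · rw [term_eq_zero s p (show 2 * k + 1 < 2 * (k + 1) by omega)]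
    simp only [term, show 2 * k + 2 - (k + 1) = k + 1 by omega, show 2 * k - k = k by omega,
      show 2 * k + 2 - 2 * (k + 1) = 0 by omega, tsub_self, Nat.choose_self]
    push_cast
    ring
  · obtain ⟨i, rfl⟩ : ∃ i, n = 2 * k + 1 + i := ⟨n - (2 * k + 1), by omega⟩
    have pascal := Nat.choose_succ_succ' (k + 1 + i) k
    simp only [term, show 2 * k + 1 + i + 2 - (k + 1) = k + 1 + i + 1 by omega,
      show 2 * k + 1 + i + 1 - (k + 1) = k + 1 + i by omega,
      show 2 * k + 1 + i - k = k + 1 + i by omega,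
      show 2 * k + 1 + i + 2 - 2 * (k + 1) = i + 1 by omega,
      show 2 * k + 1 + i + 1 - 2 * (k + 1) = i by omega,
      show 2 * k + 1 + i - 2 * k = i + 1 by omega, pascal]
    push_cast
    ring

lemma sum_term_add_two (n : ℕ) :
    ∑ k ∈ range ((n + 2) / 2 + 1), term s p (n + 2) k =
      s * ∑ k ∈ range ((n + 1) / 2 + 1), term s p (n + 1) k -
        p * ∑ k ∈ range (n / 2 + 1), term s p n k := by
  have head : term s p (n + 2) 0 = s * term s p (n + 1) 0 := by
    simp only [term, Nat.mul_zero, Nat.sub_zero, pow_zero, Nat.choose_zero_right, Nat.cast_one,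
      one_mul, pow_succ]
    ring
  rw [show (n + 2) / 2 + 1 = n / 2 + 1 + 1 by omega, sum_range_succ',
    ← sum_range_term_eq s p (N := n / 2 + 1 + 1) (n := n + 1) (by omega),
    sum_range_succ' (term s p (n + 1))]
  simp only [term_add_two_succ, sum_sub_distrib, ← mul_sum, head]
  ring

end GirardWaring

namespace Polynomial

open GirardWaring

variable {R : Type*} [CommRing R]

theorem dickson_two_eq_sum (a : R) (n : ℕ) :
    dickson 2 a n =
      ∑ k ∈ range (n / 2 + 1), (-1) ^ k * ((n - k).choose k : R[X]) * C a ^ k * X ^ (n - 2 * k) := by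
  change _ = ∑ k ∈ range (n / 2 + 1), term X (C a) n k
  induction n using Nat.twoStepInduction with
  | zero => norm_num [term]
  | one => simp [term]
  | more n ih₀ ih₁ => rw [dickson_add_two, sum_term_add_two, ih₀, ih₁]

theorem sub_mul_dickson_two_eval_add (x y : R) (n : ℕ) :
    (x - y) * (dickson 2 (x * y) n).eval (x + y) = x ^ (n + 1) - y ^ (n + 1) := by
  induction n using Nat.twoStepInduction with
  | zero => norm_num
  | one => simp only [dickson_one, eval_X]; ring
  | more n ih₀ ih₁ =>
    rw [dickson_add_two]
    simp only [eval_sub, eval_mul, eval_X, eval_C]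
    linear_combination (x + y) * ih₁ - x * y * ih₀

end Polynomial

/-- Second Girard–Waring formula, stated without division: for `m ≥ 1` in any commutative ring,
`X^m - Y^m = (X - Y) * ∑_{0 ≤ k ≤ (m-1)/2} (-1)^k * C(m-1-k,k) * (XY)^k * (X+Y)^{m-1-2k}`. -/
theorem girard_waring_diff {R : Type*} [CommRing R] (m : ℕ) (hm : 1 ≤ m) (X Y : R) :
    X ^ m - Y ^ m =
      (X - Y) *
        ∑ k ∈ Finset.range ((m - 1) / 2 + 1),
          (-1 : R) ^ k * (Nat.choose (m - 1 - k) k : R) * (X * Y) ^ k *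
            (X + Y) ^ (m - 1 - 2 * k) := by
  obtain ⟨n, rfl⟩ : ∃ n, m = n + 1 := ⟨m - 1, by omega⟩
  rw [← sub_mul_dickson_two_eval_add, dickson_two_eq_sum]
  simp [eval_finsetSum]
end

section
/- Let t be the formal power series in x satisfying t = 0 + higher order terms and x = (27/4) * t * (1-t)^2. Then for every k \ge 1, the coefficient of x^k in t equals (4/27)^k * (binom(3k-1, k-1) - 3*binom(3k-2, k-2)). -/
/-!
Applying the Euler derivation `θ = X d/dX` to `X = (27/4) t (1-t)²` gives `(1-3t) θt = t(1-t)`.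
Applying `θ` once more and eliminating `θt`, `θ²t` shows that `t - 2/3` satisfies the
hypergeometric equation `θ(θ - 1/2) f = X (θ - 1/3)(θ + 1/3) f`. On coefficients this is the
recurrence `27 (n+1)(2n+1) a_{n+1} = 6 (3n-1)(3n+1) a_n` for `n ≥ 1`, with `a_1 = 4/27`, whose
solution is `a_k = (4/27)^k C(3k-2, k-1) / k`; Pascal's rule turns this into the stated form.
-/

open PowerSeries

theorem Derivation.map_ofNat {R A M : Type*} [CommSemiring R] [CommSemiring A] [AddCommMonoid M]
    [Algebra R A] [Module A M] [Module R M] (D : Derivation R A M) (n : ℕ) [n.AtLeastTwo] :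
    D (no_index (OfNat.ofNat n : A)) = 0 :=
  D.map_natCast n

namespace PowerSeries

variable {R : Type*} [CommRing R]

noncomputable def eulerDerivation (R : Type*) [CommRing R] : Derivation R R⟦X⟧ R⟦X⟧ :=
  (X : R⟦X⟧) • d⁄dX R

theorem eulerDerivation_apply (f : R⟦X⟧) : eulerDerivation R f = X * d⁄dX R f := rfl

@[simp]
theorem eulerDerivation_X : eulerDerivation R X = X := by
  simp [eulerDerivation_apply]

@[simp]
theorem eulerDerivation_C (r : R) : eulerDerivation R (C r) = 0 := by
  simp [eulerDerivation_apply]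

@[simp]
theorem coeff_eulerDerivation (f : R⟦X⟧) (n : ℕ) :
    coeff n (eulerDerivation R f) = n * coeff n f := by
  rcases n with _ | n
  · simp [eulerDerivation_apply]
  · rw [eulerDerivation_apply, coeff_succ_X_mul, coeff_derivative, mul_comm]
    push_cast
    rfl

end PowerSeries

theorem Nat.two_mul_succ_mul_choose_three_mul_add_four (m : ℕ) :
    2 * (m + 1) * (2 * m + 3) * (3 * m + 4).choose (m + 1)
      = 3 * (3 * m + 2) * (3 * m + 4) * (3 * m + 1).choose m := by
  apply Nat.cast_injective (R := ℚ)
  push_cast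
  rw [Nat.cast_choose ℚ (by omega : m + 1 ≤ 3 * m + 4), Nat.cast_choose ℚ (by omega : m ≤ 3 * m + 1),
    show 3 * m + 4 - (m + 1) = 2 * m + 3 by omega, show 3 * m + 1 - m = 2 * m + 1 by omega]
  simp only [Nat.factorial_succ]
  push_cast
  field_simp
  ring

theorem choose_sub_three_mul_choose {k : ℕ} (hk : 1 ≤ k) :
    ((3 * k - 1).choose (k - 1) : ℚ) - 3 * (if 2 ≤ k then ((3 * k - 2).choose (k - 2) : ℚ) else 0)
      = (3 * k - 2).choose (k - 1) / k := by
  obtain ⟨m, rfl⟩ := Nat.exists_eq_add_of_le' hk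
  rcases m with _ | j
  · norm_num
  · rw [if_pos (by omega), show 3 * (j + 1 + 1) - 1 = 3 * j + 4 + 1 by omega,
      show 3 * (j + 1 + 1) - 2 = 3 * j + 4 by omega, show j + 1 + 1 - 1 = j + 1 by omega,
      show j + 1 + 1 - 2 = j by omega, Nat.choose_succ_succ', Nat.cast_add]
    have h := Nat.choose_succ_right_eq (3 * j + 4) j
    rw [show 3 * j + 4 - j = 2 * j + 4 by omega] at h
    have hq : ((3 * j + 4).choose (j + 1) * (j + 1) : ℚ) = (3 * j + 4).choose j * (2 * j + 4) := by
      exact_mod_cast h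
    field_simp
    push_cast
    linear_combination hq

section

variable {t : ℚ⟦X⟧}

local notation "θ" => eulerDerivation ℚ

theorem one_sub_three_mul_mul_eulerDerivation (h0 : constantCoeff t = 0)
    (ht : C (27 / 4) * t * (1 - t) ^ 2 = X) : (1 - 3 * t) * θ t = t * (1 - t) := by
  have h := congrArg θ ht
  simp only [Derivation.leibniz, Derivation.leibniz_pow, map_sub, Derivation.map_one_eq_zero,
    eulerDerivation_X, eulerDerivation_C, smul_eq_mul] at h
  have hne : C (27 / 4 : ℚ) * (1 - t) ≠ 0 := ne_of_apply_ne constantCoeff (by simp [h0])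
  apply mul_left_cancel₀ hne
  linear_combination h - ht

theorem eulerDerivation_ode (h0 : constantCoeff t = 0) (ht : C (27 / 4) * t * (1 - t) ^ 2 = X) :
    27 * (2 * θ (θ t) - θ t) = X * (54 * θ (θ t) - 6 * t) + 4 * X := by
  have h1 := one_sub_three_mul_mul_eulerDerivation h0 ht
  have h2 := congrArg θ h1
  simp only [Derivation.leibniz, map_sub, Derivation.map_one_eq_zero, Derivation.map_ofNat,
    smul_eq_mul] at h2
  have hC : (4 : ℚ⟦X⟧) * C (27 / 4) = 27 := by
    rw [← map_ofNat C 4, ← map_ofNat C 27, ← map_mul]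
    norm_num
  -- `1 - 3t` is a unit, so it suffices to check the equation after clearing it from `θt` and `θ²t`
  have hne : (1 - 3 * t) ^ 3 ≠ 0 := pow_ne_zero _ (ne_of_apply_ne constantCoeff (by simp [h0]))
  apply mul_left_cancel₀ hne
  linear_combination (54 * (1 - X) * (1 - 3 * t) ^ 2) * h2
    + (54 * (1 - X) * (1 - 3 * t) * (1 - 2 * t) + 162 * (1 - X) * ((1 - 3 * t) * θ t + t * (1 - t))
      - 27 * (1 - 3 * t) ^ 2) * h1
    + 4 * (1 + 3 * t) * ht - (1 + 3 * t) * t * (1 - t) ^ 2 * hC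

theorem coeff_succ_recurrence (h0 : constantCoeff t = 0) (ht : C (27 / 4) * t * (1 - t) ^ 2 = X)
    (n : ℕ) : 27 * (n + 1) * (2 * n + 1) * coeff (n + 1) t
      = 6 * (3 * n - 1) * (3 * n + 1) * coeff n t + if n = 0 then 4 else 0 := by
  have h := eulerDerivation_ode h0 ht
  rw [← map_ofNat C 27, ← map_ofNat C 54, ← map_ofNat C 6, ← map_ofNat C 4, ← map_ofNat C 2] at h
  have hn := congrArg (coeff (n + 1)) h
  simp only [map_add, map_sub, coeff_succ_X_mul, coeff_succ_mul_X, coeff_C_mul, coeff_C,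
    coeff_eulerDerivation] at hn
  push_cast at hn
  linear_combination hn

theorem coeff_eq_choose_div (h0 : constantCoeff t = 0) (ht : C (27 / 4) * t * (1 - t) ^ 2 = X)
    {k : ℕ} (hk : 1 ≤ k) : coeff k t = (4 / 27) ^ k * ((3 * k - 2).choose (k - 1) / k) := by
  obtain ⟨m, rfl⟩ := Nat.exists_eq_add_of_le' hk
  clear hk
  rw [show 3 * (m + 1) - 2 = 3 * m + 1 by omega, Nat.add_sub_cancel]
  induction m with
  | zero =>
    have h := coeff_succ_recurrence h0 ht 0
    simp only [h0, coeff_zero_eq_constantCoeff_apply] at h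
    norm_num at h ⊢
    linear_combination h / 27
  | succ m ih =>
    have h := coeff_succ_recurrence h0 ht (m + 1)
    have hratio : (2 * (m + 1) * (2 * m + 3) * (3 * m + 4).choose (m + 1) : ℚ)
        = 3 * (3 * m + 2) * (3 * m + 4) * (3 * m + 1).choose m := by
      exact_mod_cast Nat.two_mul_succ_mul_choose_three_mul_add_four m
    rw [ih, if_neg (by omega)] at h
    rw [show 3 * (m + 1) + 1 = 3 * m + 4 by omega]
    push_cast at h ⊢
    field_simp at h ⊢
    apply mul_left_cancel₀ (show (27 * (m + 1) * (2 * m + 3) : ℚ) ≠ 0 by positivity)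
    linear_combination h - 2 * (4 / 27 : ℚ) ^ (m + 1) * hratio

end

/-- If `t ∈ ℚ⟦x⟧` has zero constant term and satisfies `x = (27/4) t (1-t)²`, then for `k ≥ 1`,
`[x^k] t = (4/27)^k * (C(3k-1,k-1) - 3 C(3k-2,k-2))`, binomials with negative lower index being 0. -/
theorem coeff_inverse_series (t : PowerSeries ℚ)
    (h0 : PowerSeries.constantCoeff (R := ℚ) t = 0)
    (ht : PowerSeries.C (R := ℚ) (27 / 4) * t * (1 - t) ^ 2 = PowerSeries.X)
    (k : ℕ) (hk : 1 ≤ k) :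
    PowerSeries.coeff (R := ℚ) k t =
      (4 / 27 : ℚ) ^ k *
        ((Nat.choose (3 * k - 1) (k - 1) : ℚ) -
          3 * (if 2 ≤ k then (Nat.choose (3 * k - 2) (k - 2) : ℚ) else 0)) := by
  rw [coeff_eq_choose_div h0 ht hk, choose_sub_three_mul_choose hk]
end

section
/- With t the formal power series inverse of x = (27/4) t (1-t)^2 (zero constant term), one has t = \sum_{k \ge 1} (1/k) * binom(3k-2, k-1) * 2^{2k} / 3^{3k} * x^k as formal power series in x. -/
/-!
Differentiating `X = (27/4) t (1 - t)²` twice and eliminating `t'` and `t''` shows that `t`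
solves Gauss's hypergeometric equation `X(1 - X) t'' + (1/2 - X) t' + t/9 = 2/27`, i.e. the one
with parameters `a = 1/3`, `b = -1/3`, `c = 1/2`. On coefficients this equation is the
recursion `(n + 1)(n + 1/2) tₙ₊₁ = (n + 1/3)(n - 1/3) tₙ + [n = 0] 2/27`, which determines `t`
from `t₀ = 0`; the stated coefficients satisfy the same recursion.
-/

open PowerSeries

namespace PowerSeries

variable {R : Type*} [CommRing R]

instance [CharZero R] : CharZero R⟦X⟧ := charZero_of_injective_ringHom C_injective

theorem ofNat_mul_C (n : ℕ) [n.AtLeastTwo] (r : R) :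
    (OfNat.ofNat n : R⟦X⟧) * C r = C (OfNat.ofNat n * r) := by
  rw [map_mul, map_ofNat]

@[simp]
theorem derivative_ofNat (n : ℕ) [n.AtLeastTwo] :
    d⁄dX R (no_index (OfNat.ofNat n : R⟦X⟧)) = 0 := by
  rw [← map_ofNat C n, derivative_C]

noncomputable def hypergeometricOp (a b c : R) (f : R⟦X⟧) : R⟦X⟧ :=
  X * (1 - X) * d⁄dX R (d⁄dX R f) + (C c - C (a + b + 1) * X) * d⁄dX R f - C (a * b) * f

theorem coeff_hypergeometricOp (a b c : R) (f : R⟦X⟧) (n : ℕ) :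
    coeff n (hypergeometricOp a b c f) =
      (n + 1) * (n + c) * coeff (n + 1) f - (n + a) * (n + b) * coeff n f := by
  have hop : hypergeometricOp a b c f = X * d⁄dX R (d⁄dX R f) - X * (X * d⁄dX R (d⁄dX R f))
      + C c * d⁄dX R f - C (a + b + 1) * (X * d⁄dX R f) - C (a * b) * f := by
    rw [hypergeometricOp]; ring
  rw [hop]
  rcases n with _ | _ | n <;>
    simp only [LinearMap.map_add, LinearMap.map_sub, coeff_C_mul, coeff_succ_X_mul,
      coeff_zero_X_mul, coeff_derivative] <;> push_cast <;> ring

theorem eq_of_hypergeometricOp_eq [IsDomain R] [CharZero R] {a b c : R}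
    (hc : ∀ n : ℕ, (n : R) + c ≠ 0) {f g : R⟦X⟧}
    (h : hypergeometricOp a b c f = hypergeometricOp a b c g)
    (h0 : constantCoeff f = constantCoeff g) : f = g := by
  ext n
  induction n with
  | zero => simpa using h0
  | succ n ih =>
    have hn := congrArg (coeff n) h
    rw [coeff_hypergeometricOp, coeff_hypergeometricOp, ih, sub_left_inj] at hn
    exact mul_left_cancel₀ (mul_ne_zero (Nat.cast_add_one_ne_zero n) (hc n)) hn

end PowerSeries

theorem hypergeometricOp_eq_of_cubic_eq_X {K : Type*} [Field K] [CharZero K] {t : K⟦X⟧}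
    (h0 : constantCoeff t = 0) (ht : C (27 / 4 : K) * t * (1 - t) ^ 2 = X) :
    hypergeometricOp (1 / 3) (-1 / 3) (1 / 2) t = C (2 / 27) := by
  set s := d⁄dX K t
  set e := d⁄dX K s
  have hκ : 4 * C (27 / 4 : K) = 27 := by
    rw [ofNat_mul_C, ← map_ofNat C 27]; norm_num
  have hX : 27 * (t * (1 - t) ^ 2) = 4 * X := by
    linear_combination 4 * ht - t * (1 - t) ^ 2 * hκ
  have hs : 27 * ((1 - t) * (1 - 3 * t) * s) = 4 := by
    have h := congrArg (d⁄dX K) ht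
    simp only [Derivation.leibniz, Derivation.leibniz_pow, derivative_C, derivative_X, map_sub,
      Derivation.map_one_eq_zero, smul_eq_mul, nsmul_eq_mul] at h
    linear_combination 4 * h - (1 - t) * (1 - 3 * t) * s * hκ
  have he : 27 * ((1 - t) * (1 - 3 * t) * e + (6 * t - 4) * s ^ 2) = 0 := by
    have h := congrArg (d⁄dX K) hs
    simp only [Derivation.leibniz, map_sub, derivative_ofNat, Derivation.map_one_eq_zero,
      smul_eq_mul] at h
    linear_combination h
  have hp : (1 - t) * (1 - 3 * t) ≠ 0 := by
    intro h
    simpa [h0] using congrArg constantCoeff h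
  -- With `p = (1 - t)(1 - 3t)`, `hs` and `he` say `t' = 4 / (27 p)` and `t'' = -(6t - 4) t'² / p`,
  -- so `27 p³` clears all denominators and what remains is a multiple of `hX`.
  have hode : 54 * X * (1 - X) * e + 27 * (1 - 2 * X) * s + 6 * t = 4 := by
    refine mul_left_cancel₀ (mul_ne_zero (by norm_num : (27 : K⟦X⟧) ≠ 0) (pow_ne_zero 3 hp)) ?_
    linear_combination 54 * X * (1 - X) * ((1 - t) * (1 - 3 * t)) ^ 2 * he
      - 2 * X * (1 - X) * (6 * t - 4) * (27 * ((1 - t) * (1 - 3 * t)) * s + 4) * hs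
      + 27 * (1 - 2 * X) * ((1 - t) * (1 - 3 * t)) ^ 2 * hs
      - (8 * (6 * t - 4) * (X - 1) - 54 * ((1 - t) * (1 - 3 * t)) ^ 2
        + 54 * (6 * t - 4) * t * (1 - t) ^ 2) * hX
  have hc : 2 * C (1 / 2 : K) = 1 := by rw [ofNat_mul_C]; norm_num
  have hab : 9 * C (1 / 3 * (-1 / 3) : K) = -1 := by rw [ofNat_mul_C]; norm_num
  have hrhs : 27 * C (2 / 27 : K) = 2 := by rw [ofNat_mul_C, ← map_ofNat C 2]; norm_num
  have hsum : C (1 / 3 + -1 / 3 + 1 : K) = 1 := by norm_num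
  refine mul_left_cancel₀ (by norm_num : (54 : K⟦X⟧) ≠ 0) ?_
  rw [hypergeometricOp, hsum]
  linear_combination hode + 27 * s * hc - 6 * t * hab - 2 * hrhs

theorem Nat.choose_three_mul_add_four_succ (m : ℕ) :
    (3 * m + 4).choose (m + 1) * (2 * (m + 1) * (2 * m + 3)) =
      (3 * m + 1).choose m * (3 * (3 * m + 2) * (3 * m + 4)) := by
  have h1 : (3 * m + 2) * (3 * m + 1).choose m = (3 * m + 2).choose (m + 1) * (m + 1) :=
    Nat.add_one_mul_choose_eq _ _
  have h2 : (3 * m + 2).choose (m + 1) * (3 * m + 3) =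
      (3 * m + 3).choose (m + 1) * (2 * m + 2) := by
    rw [Nat.choose_mul_succ_eq]; congr 1; omega
  have h3 : (3 * m + 3).choose (m + 1) * (3 * m + 4) =
      (3 * m + 4).choose (m + 1) * (2 * m + 3) := by
    rw [Nat.choose_mul_succ_eq]; congr 1; omega
  apply Nat.eq_of_mul_eq_mul_right (by omega : 0 < m + 1)
  linear_combination (2 * m + 2) * (m + 1) * h3.symm + (3 * m + 4) * (m + 1) * h2.symm
    + (3 * m + 3) * (3 * m + 4) * h1.symm

def cubicInverseCoeff (k : ℕ) : ℚ :=
  if 1 ≤ k then (1 / (k : ℚ)) * (Nat.choose (3 * k - 2) (k - 1) : ℚ) * 2 ^ (2 * k) / 3 ^ (3 * k)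
  else 0

theorem cubicInverseCoeff_succ (n : ℕ) :
    (n + 1) * (n + 1 / 2) * cubicInverseCoeff (n + 1) =
      (n + 1 / 3) * (n + -1 / 3) * cubicInverseCoeff n + if n = 0 then 2 / 27 else 0 := by
  rcases n with _ | m
  · norm_num [cubicInverseCoeff]
  · have hb : ((3 * m + 4).choose (m + 1) : ℚ) * (2 * (m + 1) * (2 * m + 3)) =
        (3 * m + 1).choose m * (3 * (3 * m + 2) * (3 * m + 4)) := by
      exact_mod_cast Nat.choose_three_mul_add_four_succ m
    simp only [cubicInverseCoeff, if_pos (by omega : 1 ≤ m + 1 + 1), if_pos (by omega : 1 ≤ m + 1),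
      if_neg (by omega : m + 1 ≠ 0), show 3 * (m + 1 + 1) - 2 = 3 * m + 4 by omega,
      show 3 * (m + 1) - 2 = 3 * m + 1 by omega, Nat.add_sub_cancel, add_zero]
    rw [show 2 * (m + 1 + 1) = 2 * (m + 1) + 2 by ring,
      show 3 * (m + 1 + 1) = 3 * (m + 1) + 3 by ring, pow_add, pow_add]
    push_cast
    field_simp
    linear_combination hb

theorem hypergeometricOp_mk_cubicInverseCoeff :
    hypergeometricOp (1 / 3) (-1 / 3) (1 / 2) (mk cubicInverseCoeff) = C (2 / 27) := by
  ext n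
  rw [coeff_hypergeometricOp, coeff_mk, coeff_mk, coeff_C, cubicInverseCoeff_succ]
  ring

/-- If `t ∈ ℚ⟦x⟧` has zero constant term and satisfies `x = (27/4) t (1-t)²`, then
`t = ∑_{k ≥ 1} (1/k) C(3k-2, k-1) 2^{2k}/3^{3k} x^k`, i.e. the coefficients of `t` are as stated. -/
theorem series_for_t (t : PowerSeries ℚ)
    (h0 : PowerSeries.constantCoeff t = 0)
    (ht : PowerSeries.C (27 / 4 : ℚ) * t * (1 - t) ^ 2 = PowerSeries.X) :
    t = PowerSeries.mk (fun k =>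
      if 1 ≤ k then
        (1 / (k : ℚ)) * (Nat.choose (3 * k - 2) (k - 1) : ℚ) * 2 ^ (2 * k) / 3 ^ (3 * k)
      else 0) := by
  refine eq_of_hypergeometricOp_eq (a := 1 / 3) (b := -1 / 3) (c := 1 / 2)
    (fun n => by positivity) ?_ (by simpa [cubicInverseCoeff] using h0)
  rw [hypergeometricOp_eq_of_cubic_eq_X h0 ht]
  exact hypergeometricOp_mk_cubicInverseCoeff.symm
end

section
/- Let t be the formal power series with t(0)=0 satisfying z^3 = (27/4) t (1-t)^2, and let f_0 = 1/((1-t)(1-3t)) viewed as a power series in z^3. Then the kernel equation F(u)(z^3 U^3 - 3U + 2) = -3U - 2 z^3 U^2 f_0 + 2 f_0 (with u = zU) is consistent: substituting U = 2/(3(1-t)) into the numerator -3U - 2 z^3 U^2 f_0 + 2 f_0 yields 0. -/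
/-! With `s = 1 - t` and `x = (27/4) t s²`, the candidate `U = (2/3) s⁻¹` gives
`x U³ = 2 t s⁻¹` and `3U = 2 s⁻¹`, so the kernel is `2 (t - 1) s⁻¹ + 2 = 0`; likewise
`2 x U² f₀ = 6 t f₀`, so the numerator is `2 (1 - 3t) f₀ - 2 s⁻¹ = 0`. Only the inverse
identities `s s⁻¹ = 1` and `s (1 - 3t) f₀ = 1` enter. -/

section KernelIdentities

variable {R : Type*} [CommRing R] (C : ℚ →+* R) {t v w : R}

theorem kernel_eq_zero_of_mul_eq_one (hv : (1 - t) * v = 1) :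
    C (27 / 4) * t * (1 - t) ^ 2 * (C (2 / 3) * v) ^ 3 - 3 * (C (2 / 3) * v) + 2 = 0 := by
  have hcube : C (27 / 4) * C (2 / 3) ^ 3 = 2 := by
    rw [← map_pow, ← map_mul, ← map_ofNat C 2]; norm_num
  have hthree : 3 * C (2 / 3) = 2 := by
    rw [← map_ofNat C 3, ← map_mul, ← map_ofNat C 2]; norm_num
  linear_combination (t * (1 - t) ^ 2 * v ^ 3) * hcube - v * hthree +
    (2 * t * v * ((1 - t) * v + 1) - 2) * hv

theorem numerator_eq_zero_of_mul_eq_one (hv : (1 - t) * v = 1)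
    (hw : (1 - t) * (1 - 3 * t) * w = 1) :
    -3 * (C (2 / 3) * v) - 2 * (C (27 / 4) * t * (1 - t) ^ 2) * (C (2 / 3) * v) ^ 2 * w
      + 2 * w = 0 := by
  have hsquare : 2 * C (27 / 4) * C (2 / 3) ^ 2 = 6 := by
    rw [← map_ofNat C 2, ← map_pow, ← map_mul, ← map_mul, ← map_ofNat C 6]; norm_num
  have hthree : 3 * C (2 / 3) = 2 := by
    rw [← map_ofNat C 3, ← map_mul, ← map_ofNat C 2]; norm_num
  linear_combination (-(t * (1 - t) ^ 2 * v ^ 2 * w)) * hsquare - v * hthree +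
    (-(6 * t * w * ((1 - t) * v + 1)) - 2 * (1 - 3 * t) * w) * hv + 2 * v * hw

end KernelIdentities

/-- With `t ∈ ℚ⟦x⟧`, `t(0)=0`, `x = z³ = (27/4) t (1-t)²`, `f₀ = 1/((1-t)(1-3t))` and
`U = 2/(3(1-t))`: `U` is a root of the kernel `xU³ - 3U + 2`, and `f₀` kills the
numerator `-3U - 2xU²f₀ + 2f₀`. -/
theorem kernel_root_and_numerator (t : PowerSeries ℚ)
    (h0 : PowerSeries.constantCoeff t = 0)
    (ht : PowerSeries.C (R := ℚ) (27 / 4) * t * (1 - t) ^ 2 = PowerSeries.X) :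
    let x : PowerSeries ℚ := PowerSeries.X
    let f₀ : PowerSeries ℚ := ((1 - t) * (1 - 3 * t))⁻¹
    let U : PowerSeries ℚ := PowerSeries.C (R := ℚ) (2 / 3) * (1 - t)⁻¹
    x * U ^ 3 - 3 * U + 2 = 0 ∧
    -3 * U - 2 * x * U ^ 2 * f₀ + 2 * f₀ = 0 := by
  intro x f₀ U
  have hv : (1 - t) * (1 - t)⁻¹ = 1 := PowerSeries.mul_inv_cancel _ (by simp [h0])
  have hw : (1 - t) * (1 - 3 * t) * f₀ = 1 := PowerSeries.mul_inv_cancel _ (by simp [h0])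
  simp only [x, U, ← ht]
  exact ⟨kernel_eq_zero_of_mul_eq_one _ hv, numerator_eq_zero_of_mul_eq_one _ hv hw⟩
end

section
/- In the first model, the probability generating function of the special state \beta satisfies f_\beta(z) = \sum_{n \ge 0} (2^{2n+1} / 3^{3n+1}) * binom(3n+1, n) * z^{3n+1}. Equivalently, with t the series inverse of x = (27/4) t (1-t)^2, for all n \ge 0 we have (2/3) * [x^n] 1/((1-t)(1-3t)) = (2^{2n+1}/3^{3n+1}) * binom(3n+1, n). -/
open PowerSeries

/-- With `t ∈ ℚ⟦x⟧`, `t(0) = 0`, `x = (27/4) t (1-t)²`: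
`(2/3) * [x^n] 1/((1-t)(1-3t)) = (2^{2n+1}/3^{3n+1}) * C(3n+1, n)`,
giving the series for the special state `β`: `f_β(z) = ∑ (2^{2n+1}/3^{3n+1}) C(3n+1,n) z^{3n+1}`. -/
theorem coeff_f_beta (t : PowerSeries ℚ)
    (h0 : PowerSeries.constantCoeff (R := ℚ) t = 0)
    (ht : PowerSeries.C (R := ℚ) (27 / 4) * t * (1 - t) ^ 2 = PowerSeries.X)
    (n : ℕ) :
    (2 / 3 : ℚ) * PowerSeries.coeff (R := ℚ) n (((1 - t) * (1 - 3 * t))⁻¹) =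
      (2 ^ (2 * n + 1) / 3 ^ (3 * n + 1) : ℚ) * (Nat.choose (3 * n + 1) n : ℚ) := by
  have Dmul : ∀ f g : ℚ⟦X⟧, d⁄dX ℚ (f*g) = f * d⁄dX ℚ g + g * d⁄dX ℚ f := by
    intro f g; simpa [smul_eq_mul] using Derivation.leibniz (d⁄dX ℚ) f g
  set u := d⁄dX ℚ t with hu_def
  set P : ℚ⟦X⟧ := (1 - t) * (1 - 3*t) with hP_def
  -- scaled base equation, numerals only
  have ht4 : 27 * (t * (1-t)^2) = 4 * X := by
    have h2 := congrArg (fun z => (C 4) * z) ht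
    rw [← ht] at h2
    calc 27 * (t * (1-t)^2) = (C 4 * C (27/4)) * t * (1-t)^2 := by
          rw [← map_mul]; norm_num; rw [map_ofNat]; ring
      _ = 4 * X := by rw [mul_assoc, mul_assoc, ← mul_assoc (C (27/4)), ht, ← map_ofNat (C) 4]
  have hcancel : ∀ z : ℚ⟦X⟧, 27 * z = 0 → z = 0 := by
    intro z hz
    have h27 : (27 : ℚ⟦X⟧) ≠ 0 := by
      intro h; have := congrArg (constantCoeff) h
      simp only [map_ofNat, map_zero] at this; norm_num at this
    rcases mul_eq_zero.mp hz with h | h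
    · exact absurd h h27
    · exact h
  -- first derivative
  have hu4 : 27 * (u * P) = 4 := by
    have h2 := congrArg (⇑(d⁄dX ℚ)) ht4
    have e27 : d⁄dX ℚ ((27:ℚ⟦X⟧) * (t * (1-t)^2)) = 27 * (u * P) := by
      rw [← map_ofNat (C) 27, Dmul]
      have e : t * (1-t)^2 = t * ((1-t)*(1-t)) := by ring
      rw [e, Dmul, Dmul]
      simp only [map_sub, map_one, derivative_C, Derivation.map_one_eq_zero]
      rw [hP_def]; ring
    have e4 : d⁄dX ℚ ((4:ℚ⟦X⟧) * X) = 4 := by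
      rw [← map_ofNat (C) 4, Dmul, derivative_X, derivative_C]
      rw [map_ofNat]; ring
    rw [e27, e4] at h2; exact h2
  -- second derivative of t
  set v := d⁄dX ℚ u with hv_def
  have hDP : d⁄dX ℚ P = (6*t - 4) * u := by
    rw [hP_def, Dmul]
    have e3 : (1:ℚ⟦X⟧) - 3*t = 1 - C 3 * t := by rw [map_ofNat]
    rw [e3]
    simp only [map_sub, map_one, Derivation.map_one_eq_zero]
    rw [Dmul, derivative_C]
    rw [map_ofNat]; ring
  have hv : v * P = (4 - 6*t) * u^2 := by
    have h2 := congrArg (⇑(d⁄dX ℚ)) hu4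
    have e27 : d⁄dX ℚ ((27:ℚ⟦X⟧) * (u * P)) = 27 * (v * P + u * ((6*t-4)*u)) := by
      rw [← map_ofNat (C) 27, Dmul, Dmul, derivative_C, hDP, map_ofNat]; ring
    have e4 : d⁄dX ℚ ((4:ℚ⟦X⟧)) = 0 := by
      rw [← map_ofNat (C) 4, derivative_C]
    rw [e27, e4] at h2
    have h3 := hcancel _ (by linear_combination h2 :
      27 * (v * P + u * ((6*t-4)*u) ) = 0)
    linear_combination h3
  -- inverse F
  have hPc : constantCoeff P ≠ 0 := by
    rw [hP_def]
    simp [h0]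
  set F := P⁻¹ with hF_def
  have hF1 : P * F = 1 := PowerSeries.mul_inv_cancel P hPc
  set B := d⁄dX ℚ F with hB_def
  have hB : B * P = -(F * ((6*t-4)*u)) := by
    have h2 := congrArg (⇑(d⁄dX ℚ)) hF1
    rw [Dmul, hDP, Derivation.map_one_eq_zero] at h2
    linear_combination h2
  set A := d⁄dX ℚ B with hA_def
  have hA : A * P = -(2*B*((6*t-4)*u) + F*(6*u*u + (6*t-4)*v)) := by
    have h2 := congrArg (⇑(d⁄dX ℚ)) hB
    have eL : d⁄dX ℚ (B * P) = B * ((6*t-4)*u) + P * A := by rw [Dmul, hDP]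
    have eR : d⁄dX ℚ (-(F * ((6*t-4)*u))) = -(F * (6*u*u + (6*t-4)*v) + ((6*t-4)*u) * B) := by
      rw [map_neg, Dmul, Dmul]
      have e6 : d⁄dX ℚ ((6:ℚ⟦X⟧)*t - 4) = 6 * u := by
        rw [← map_ofNat (C) 6, ← map_ofNat (C) 4, map_sub, Dmul, derivative_C, derivative_C, map_ofNat]
        ring
      rw [e6]; ring
    rw [eL, eR] at h2
    linear_combination h2
  -- multiplied-out forms
  have hB3 : 27 * (B * P^3) = 4 * (4 - 6*t) := by
    calc 27 * (B * P^3) = ((B*P) * P^2) * 27 := by ring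
      _ = (-(F * ((6*t-4)*u)) * P^2) * 27 := by rw [hB]
      _ = -((6*t-4) * ((27 * (u*P)) * (P * F))) := by ring
      _ = -((6*t-4) * (4 * 1)) := by rw [hu4, hF1]
      _ = 4 * (4 - 6*t) := by ring
  have hA5 : 729 * (A * P^5) = 16 * (3*(6*t-4)^2 - 6*P) := by
    calc 729 * (A * P^5) = ((A*P) * P^4) * 729 := by ring
      _ = (-(2*B*((6*t-4)*u) + F*(6*u*u + (6*t-4)*v)) * P^4) * 729 := by rw [hA]
      _ = -(2*(6*t-4)*((27*(B*P^3)) * (27*(u*P))) + 6*((27*(u*P))*(27*(u*P)))*((P*F)*P)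
            + (6*t-4)*((v*P)*(P*F))*P^2*729) := by ring
      _ = -(2*(6*t-4)*((4*(4-6*t)) * 4) + 6*(4*4)*(1*P)
            + (6*t-4)*(((4-6*t)*u^2)*1)*P^2*729) := by rw [hB3, hu4, hF1, hv]
      _ = -(2*(6*t-4)*((4*(4-6*t)) * 4) + 6*(4*4)*(1*P)
            + (6*t-4)*(4-6*t)*((27*(u*P))*(27*(u*P)))) := by ring
      _ = -(2*(6*t-4)*((4*(4-6*t)) * 4) + 6*(4*4)*(1*P)
            + (6*t-4)*(4-6*t)*(4*4)) := by rw [hu4]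
      _ = 16 * (3*(6*t-4)^2 - 6*P) := by ring
  -- the ODE
  have hG : 18*(X - X^2)*A + 27*B - 54*X*B - 16*F = 0 := by
    have hGP5 : 729 * ((18*(X - X^2)*A + 27*B - 54*X*B - 16*F) * P^5) = 0 := by
      calc 729 * ((18*(X - X^2)*A + 27*B - 54*X*B - 16*F) * P^5)
          = 18*(X - X^2)*(729*(A*P^5)) + (27 - 54*X)*(27*(B*P^3))*(27*P^2) - 16*729*((P*F)*P^4) := by
            ring
        _ = 18*(X - X^2)*(16 * (3*(6*t-4)^2 - 6*P)) + (27 - 54*X)*(4*(4-6*t))*(27*P^2)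
            - 16*729*(1*P^4) := by rw [hA5, hB3, hF1]
        _ = 0 := by
            rw [hP_def]
            linear_combination ((6480*t^2 - 8640*t + 3024)*X + (-34992*t^5 + 116640*t^4
              - 151632*t^3 + 92664*t^2 - 26352*t + 2808)) * ht4
    have h5a : 27 * ((18*(X - X^2)*A + 27*B - 54*X*B - 16*F) * P^5) = 0 :=
      hcancel _ (by linear_combination hGP5)
    have h5 := hcancel _ h5a
    have hPF5 : (P*F)^5 = 1 := by rw [hF1]; ring
    calc 18*(X - X^2)*A + 27*B - 54*X*B - 16*F
        = ((18*(X - X^2)*A + 27*B - 54*X*B - 16*F) * P^5) * F^5 := by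
          rw [show ((18*(X - X^2)*A + 27*B - 54*X*B - 16*F) * P^5) * F^5
              = (18*(X - X^2)*A + 27*B - 54*X*B - 16*F) * (P*F)^5 from by ring, hPF5, mul_one]
      _ = 0 := by rw [h5, zero_mul]
  -- coefficient recurrence
  set fc : ℕ → ℚ := fun k => coeff k F with hfc_def
  have hG2 : X * (C 18 * A) + C 27 * B = X*(X*(C 18 * A)) + X*(C 54 * B) + C 16 * F := by
    simp only [map_ofNat]
    linear_combination hG
  have hcB : ∀ k:ℕ, coeff k B = fc (k+1) * (k+1) := by
    intro k; rw [hB_def, coeff_derivative]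
  have hcA : ∀ k:ℕ, coeff k A = fc (k+2) * (k+2) * (k+1) := by
    intro k; rw [hA_def, coeff_derivative, hB_def, coeff_derivative]
    push_cast; ring
  have hfc : ∀ k, coeff k F = fc k := fun k => rfl
  have eB0 : constantCoeff B = fc 1 := by
    rw [← coeff_zero_eq_constantCoeff_apply, hcB]; norm_num
  have eF0 : constantCoeff F = fc 0 := by
    rw [← coeff_zero_eq_constantCoeff_apply, hfc]
  have eA0 : constantCoeff A = fc 2 * 2 := by
    rw [← coeff_zero_eq_constantCoeff_apply, hcA]; norm_num
  have hrec : ∀ k:ℕ, 9*(k+1)*(2*k+3) * fc (k+1) = 2*(3*k+2)*(3*k+4) * fc k := by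
    intro k
    match k with
    | 0 =>
      have e := congrArg (coeff 0) hG2
      simp only [map_add, coeff_C_mul, coeff_zero_eq_constantCoeff_apply, map_mul,
        constantCoeff_X, zero_mul, mul_zero, zero_add, eB0, eF0] at e
      push_cast
      linear_combination e
    | 1 =>
      have e := congrArg (coeff 1) hG2
      simp only [map_add, coeff_C_mul, coeff_succ_X_mul, coeff_zero_eq_constantCoeff_apply,
        map_mul, constantCoeff_X, zero_mul, mul_zero, zero_add, eA0, eB0,
        hcB 1, hfc 1] at e
      push_cast at e ⊢
      linear_combination e
    | (m+2) =>
      have e := congrArg (coeff (m+2)) hG2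
      rw [show m+2 = (m+1)+1 from rfl] at e
      simp only [map_add, coeff_C_mul, coeff_succ_X_mul] at e
      rw [hcA (m+1), hcA m, hcB (m+1), hcB (m+2), hfc] at e
      push_cast at e ⊢
      linear_combination e
  -- closed form by induction
  have hbase : fc 0 = 1 := by
    rw [← hfc 0, coeff_zero_eq_constantCoeff_apply, hF_def, PowerSeries.constantCoeff_inv, hP_def]
    simp [h0]
  have hcoef : ∀ k : ℕ, fc k = (4/27 : ℚ)^k * ((3*k+1).choose k : ℚ) := by
    intro k
    induction k with
    | zero => simpa using hbase
    | succ m ih =>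
      have h9 : ((9:ℚ)*(m+1)*(2*(m:ℚ)+3)) ≠ 0 := by positivity
      have e := hrec m
      rw [ih] at e
      have hb : (2:ℚ)*(m+1)*(2*(m:ℚ)+3) * ((3*m+4).choose (m+1) : ℚ)
          = 3*(3*(m:ℚ)+2)*(3*(m:ℚ)+4) * ((3*m+1).choose m : ℚ) := by
        have n1 : ((Nat.factorial m) : ℚ) ≠ 0 := Nat.cast_ne_zero.mpr (Nat.factorial_ne_zero m)
        have n2 : ((Nat.factorial (2*m+1)) : ℚ) ≠ 0 := Nat.cast_ne_zero.mpr (Nat.factorial_ne_zero _)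
        have n3 : ((Nat.factorial (3*m+1)) : ℚ) ≠ 0 := Nat.cast_ne_zero.mpr (Nat.factorial_ne_zero _)
        rw [Nat.cast_choose ℚ (by omega : m+1 ≤ 3*m+4),
            Nat.cast_choose ℚ (by omega : m ≤ 3*m+1),
            (by omega : (3*m+4) - (m+1) = 2*m+3), (by omega : (3*m+1) - m = 2*m+1)]
        have f1 : ((Nat.factorial (3*m+4)) : ℚ) = (3*(m:ℚ)+4)*(3*(m:ℚ)+3)*(3*(m:ℚ)+2)*((Nat.factorial (3*m+1)) : ℚ) := by
          rw [(by omega : 3*m+4 = (3*m+3)+1), Nat.factorial_succ,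
              (by omega : 3*m+3 = (3*m+2)+1), Nat.factorial_succ,
              (by omega : 3*m+2 = (3*m+1)+1), Nat.factorial_succ]
          push_cast; ring
        have f2 : ((Nat.factorial (2*m+3)) : ℚ) = (2*(m:ℚ)+3)*(2*(m:ℚ)+2)*((Nat.factorial (2*m+1)) : ℚ) := by
          rw [(by omega : 2*m+3 = (2*m+2)+1), Nat.factorial_succ,
              (by omega : 2*m+2 = (2*m+1)+1), Nat.factorial_succ]
          push_cast; ring
        have f3 : ((Nat.factorial (m+1)) : ℚ) = ((m:ℚ)+1)*((Nat.factorial m) : ℚ) := by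
          rw [Nat.factorial_succ]; push_cast; ring
        rw [f1, f2, f3]
        field_simp
      have key : ((9:ℚ)*(m+1)*(2*(m:ℚ)+3)) * ((4/27 : ℚ)^(m+1) * ((3*(m+1)+1).choose (m+1) : ℚ))
          = 2*(3*(m:ℚ)+2)*(3*(m:ℚ)+4) * ((4/27 : ℚ)^m * ((3*m+1).choose m : ℚ)) := by
        rw [(by omega : 3*(m+1)+1 = 3*m+4), pow_succ]
        linear_combination ((2/3 : ℚ)*(4/27 : ℚ)^m) * hb
      refine mul_left_cancel₀ h9 ?_
      push_cast at e key ⊢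
      rw [key]
      linear_combination e
  rw [hfc n, hcoef n]
  have p4 : ((4:ℚ)/27)^n = 2^(2*n)/3^(3*n) := by
    rw [div_pow, pow_mul, pow_mul]; norm_num
  rw [p4, pow_succ, pow_succ]
  ring
end

section
/- In \mathbb{Q}[[z]], let g_0, g_\beta, g_1, g_2, ... satisfy g_0 = 1 + z g_\beta + (1/3) z g_2, g_\beta = (1/3) z g_1, g_1 = z g_0 + (1/3) z g_3, and g_i = (2/3) z g_{i-1} + (1/3) z g_{i+2} for i \ge 2 (coefficients bounded probabilities). Then G(u) = \sum_{i\ge0} u^i g_i satisfies, with V = uz, the identity G(u) * (2V^3 - 3V^2 + z^3) = -V^3 g_0 - 3V^2 - g_1 V^2 z^2 + z^3 g_0 + g_1 V z^2. -/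
open PowerSeries

/-!
Compare coefficients of `uⁿ`. On the left the coefficient is `z²(z gₙ - 3 gₙ₋₂ + 2z gₙ₋₃)`,
which for `n ≥ 4` is `z²` times the recursion at `i = n - 2` with denominators cleared, hence zero.
The coefficients of `u⁰, …, u³` only involve `g₀, …, g₃`, and the recursions for `g₀` and `g₁`
turn them into the boundary terms on the right.
-/

theorem PowerSeries.mk_mul_kernel_eq_of_recurrence {A : Type*} [CommRing A] (x : A) (g : ℕ → A)
    (h0 : 3 * g 0 = 3 + x ^ 2 * g 1 + x * g 2)
    (h1 : 3 * g 1 = 3 * x * g 0 + x * g 3)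
    (hstep : ∀ i, 3 * g (i + 2) = 2 * x * g (i + 1) + x * g (i + 4)) :
    mk g * (2 * (X * C x) ^ 3 - 3 * (X * C x) ^ 2 + C x ^ 3) =
      -(X * C x) ^ 3 * C (g 0) - 3 * (X * C x) ^ 2 - C (g 1) * (X * C x) ^ 2 * C x ^ 2 +
        C x ^ 3 * C (g 0) + C (g 1) * (X * C x) * C x ^ 2 := by
  have lhs : mk g * (2 * (X * C x) ^ 3 - 3 * (X * C x) ^ 2 + C x ^ 3) =
      C (x ^ 3) * mk g - X ^ 2 * (C (3 * x ^ 2) * mk g) + X ^ 3 * (C (2 * x ^ 3) * mk g) := by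
    simp only [map_mul, map_pow, map_ofNat]
    ring
  have rhs : -(X * C x) ^ 3 * C (g 0) - 3 * (X * C x) ^ 2 - C (g 1) * (X * C x) ^ 2 * C x ^ 2 +
        C x ^ 3 * C (g 0) + C (g 1) * (X * C x) * C x ^ 2 =
      C (x ^ 3 * g 0) + X ^ 1 * C (x ^ 3 * g 1) - X ^ 2 * C (3 * x ^ 2 + x ^ 4 * g 1) -
        X ^ 3 * C (x ^ 3 * g 0) := by
    simp only [map_mul, map_pow, map_ofNat, map_add]
    ring
  rw [lhs, rhs]
  ext n
  simp only [map_add, map_sub, coeff_X_pow_mul', coeff_C_mul, coeff_mk, coeff_C]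
  rcases n with _ | _ | _ | _ | n
  · simp
  · simp
  · simp only [zero_add, Nat.reduceAdd, Std.le_refl, ↓reduceIte, tsub_self, Nat.reduceLeDiff,
      add_zero, OfNat.ofNat_ne_zero, Nat.one_le_ofNat, Nat.add_one_sub_one, one_ne_zero, zero_sub,
      neg_add_rev, sub_zero]
    linear_combination -x ^ 2 * h0
  · simp only [zero_add, Nat.reduceAdd, Nat.reduceLeDiff, ↓reduceIte, Nat.reduceSub, Std.le_refl,
      tsub_self, OfNat.ofNat_ne_zero, Nat.one_le_ofNat, Nat.add_one_sub_one, add_zero, one_ne_zero,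
      sub_self, zero_sub]
    linear_combination -x ^ 2 * h1
  · simp only [show n + 1 + 1 + 1 + 1 = n + 4 from rfl, le_add_iff_nonneg_left, zero_le,
      ↓reduceIte, Nat.reduceSubDiff, Nat.add_eq_zero_iff, one_ne_zero, and_false,
      add_zero, OfNat.ofNat_ne_zero, sub_self]
    linear_combination -x ^ 2 * hstep n

theorem knodel_dual_model_kernel_equation_general
    (g : ℕ → PowerSeries ℚ) (gβ : PowerSeries ℚ)
    (hg0 : g 0 = 1 + PowerSeries.X * gβ + PowerSeries.C (1 / 3 : ℚ) * PowerSeries.X * g 2)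
    (hgβ : gβ = PowerSeries.C (1 / 3 : ℚ) * PowerSeries.X * g 1)
    (hg1 : g 1 = PowerSeries.X * g 0 + PowerSeries.C (1 / 3 : ℚ) * PowerSeries.X * g 3)
    (hgi : ∀ i, 2 ≤ i →
      g i = PowerSeries.C (2 / 3 : ℚ) * PowerSeries.X * g (i - 1) +
            PowerSeries.C (1 / 3 : ℚ) * PowerSeries.X * g (i + 2)) :
    let R := PowerSeries ℚ
    let u : PowerSeries R := PowerSeries.X
    let z : PowerSeries R := PowerSeries.C (PowerSeries.X : R)
    let V : PowerSeries R := u * z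
    let G : PowerSeries R := PowerSeries.mk fun i => g i
    G * (2 * V ^ 3 - 3 * V ^ 2 + z ^ 3) =
      -V ^ 3 * PowerSeries.C (g 0) - 3 * V ^ 2 -
        PowerSeries.C (g 1) * V ^ 2 * z ^ 2 +
        z ^ 3 * PowerSeries.C (g 0) + PowerSeries.C (g 1) * V * z ^ 2 := by
  have third : (3 : ℚ⟦X⟧) * C (1 / 3) = 1 := by
    rw [← map_ofNat C 3, ← map_mul]
    norm_num
  have two_thirds : (3 : ℚ⟦X⟧) * C (2 / 3) = 2 := by
    rw [← map_ofNat C 3, ← map_ofNat C 2, ← map_mul]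
    norm_num
  refine mk_mul_kernel_eq_of_recurrence X g ?_ ?_ fun i => ?_
  · linear_combination 3 * hg0 + 3 * X * hgβ + (X ^ 2 * g 1 + X * g 2) * third
  · linear_combination 3 * hg1 + X * g 3 * third
  · have hi := hgi (i + 2) (by omega)
    rw [show i + 2 - 1 = i + 1 from rfl, show i + 2 + 2 = i + 4 from rfl] at hi
    linear_combination 3 * hi + X * g (i + 1) * two_thirds + X * g (i + 4) * third

/-- Dual Knödel model: if `g₀, g_β, g₁, g₂, …` in `ℚ⟦z⟧` satisfy the recursions
`g₀ = 1 + z g_β + (1/3)z g₂`, `g_β = (1/3)z g₁`, `g₁ = z g₀ + (1/3)z g₃`,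
`gᵢ = (2/3)z g_{i-1} + (1/3)z g_{i+2}` for `i ≥ 2` (with coefficients in `[0,1]`), then
`G(u) = ∑_{i≥0} uⁱ gᵢ` satisfies, with `V = uz`,
`G(u)(2V³ - 3V² + z³) = -V³ g₀ - 3V² - g₁V²z² + z³ g₀ + g₁Vz²`. -/
theorem knodel_dual_model_kernel_equation
    (g : ℕ → PowerSeries ℚ) (gβ : PowerSeries ℚ)
    (hbound : ∀ i n, 0 ≤ PowerSeries.coeff n (g i) ∧ PowerSeries.coeff n (g i) ≤ 1)
    (hboundβ : ∀ n, 0 ≤ PowerSeries.coeff n gβ ∧ PowerSeries.coeff n gβ ≤ 1)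
    (hg0 : g 0 = 1 + PowerSeries.X * gβ + PowerSeries.C (1 / 3 : ℚ) * PowerSeries.X * g 2)
    (hgβ : gβ = PowerSeries.C (1 / 3 : ℚ) * PowerSeries.X * g 1)
    (hg1 : g 1 = PowerSeries.X * g 0 + PowerSeries.C (1 / 3 : ℚ) * PowerSeries.X * g 3)
    (hgi : ∀ i, 2 ≤ i →
      g i = PowerSeries.C (2 / 3 : ℚ) * PowerSeries.X * g (i - 1) +
            PowerSeries.C (1 / 3 : ℚ) * PowerSeries.X * g (i + 2)) :
    let R := PowerSeries ℚ
    let u : PowerSeries R := PowerSeries.X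
    let z : PowerSeries R := PowerSeries.C (PowerSeries.X : R)
    let V : PowerSeries R := u * z
    let G : PowerSeries R := PowerSeries.mk fun i => g i
    G * (2 * V ^ 3 - 3 * V ^ 2 + z ^ 3) =
      -V ^ 3 * PowerSeries.C (g 0) - 3 * V ^ 2 -
        PowerSeries.C (g 1) * V ^ 2 * z ^ 2 +
        z ^ 3 * PowerSeries.C (g 0) + PowerSeries.C (g 1) * V * z ^ 2 :=
  knodel_dual_model_kernel_equation_general g gβ hg0 hgβ hg1 hgi
end

section
/- In the dual model, with t the series inverse of x = z^3 = (27/4) t (1-t)^2, the generating functions for states 0 and 1 are g_0 = 4/((1-3t)(4-3t)) and z^2 g_1 = 27 t (1-t)/((1-3t)(4-3t)). That is, the unique power series g_0, g_1 making the numerator -V^3 g_0 - 3V^2 - g_1 V^2 z^2 + z^3 g_0 + g_1 V z^2 vanish at both V = \sigma and V = \tau are given by these formulas. -/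
/-- In a field `K ⊇ ℚ` with `w² = 4t - 3t²`, `x = (27/4)t(1-t)²`, `σ = (3/4)(t-w)`,
`τ = (3/4)(t+w)`, and `(1-3t)(4-3t) ≠ 0`: setting `g₀ = 4/((1-3t)(4-3t))` and
`G₁ = z²g₁ = 27t(1-t)/((1-3t)(4-3t))`, the numerator
`-V³g₀ - 3V² - G₁V² + xg₀ + G₁V` vanishes at both `V = σ` and `V = τ`. -/
theorem dual_numerator_vanishes {K : Type*} [Field K] [Algebra ℚ K]
    (t w : K) (hw : w ^ 2 = 4 * t - 3 * t ^ 2)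
    (hd : (1 - 3 * t) * (4 - 3 * t) ≠ 0) :
    let x : K := algebraMap ℚ K (27 / 4) * t * (1 - t) ^ 2
    let σ : K := algebraMap ℚ K (3 / 4) * (t - w)
    let τ : K := algebraMap ℚ K (3 / 4) * (t + w)
    let g₀ : K := 4 / ((1 - 3 * t) * (4 - 3 * t))
    let G₁ : K := 27 * t * (1 - t) / ((1 - 3 * t) * (4 - 3 * t))
    (-σ ^ 3 * g₀ - 3 * σ ^ 2 - G₁ * σ ^ 2 + x * g₀ + G₁ * σ = 0) ∧
    (-τ ^ 3 * g₀ - 3 * τ ^ 2 - G₁ * τ ^ 2 + x * g₀ + G₁ * τ = 0) := by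
  intro x σ τ g₀ G₁
  haveI : CharZero K := charZero_of_injective_algebraMap (algebraMap ℚ K).injective
  have h1 : algebraMap ℚ K (3/4) = 3/4 := by rw [eq_ratCast]; norm_num
  have h2 : algebraMap ℚ K (27/4) = 27/4 := by rw [eq_ratCast]; norm_num
  simp only [x, σ, τ, g₀, G₁, h1, h2]
  have hg0 : (4 / ((1 - 3*t) * (4 - 3*t))) * ((1 - 3*t) * (4 - 3*t)) = 4 :=
    div_mul_cancel₀ _ hd
  have hG1 : (27*t*(1 - t) / ((1 - 3*t) * (4 - 3*t))) * ((1 - 3*t) * (4 - 3*t))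
      = 27*t*(1 - t) := div_mul_cancel₀ _ hd
  constructor
  · have key : (-((3:K)/4*(t - w)) ^ 3 * (4 / ((1 - 3*t) * (4 - 3*t)))
        - 3 * ((3:K)/4*(t - w)) ^ 2
        - (27*t*(1 - t) / ((1 - 3*t) * (4 - 3*t))) * ((3:K)/4*(t - w)) ^ 2
        + ((27:K)/4 * t * (1 - t) ^ 2) * (4 / ((1 - 3*t) * (4 - 3*t)))
        + (27*t*(1 - t) / ((1 - 3*t) * (4 - 3*t))) * ((3:K)/4*(t - w)))
        * ((1 - 3*t) * (4 - 3*t)) = 0 := by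
      linear_combination (-((3:K)/4*(t - w))^3 + (27:K)/4*t*(1 - t)^2) * hg0
        + (((3:K)/4*(t - w)) - ((3:K)/4*(t - w))^2) * hG1
        + ((27:K)/16*w + (81:K)/16*t - 27/4) * hw
    exact (mul_eq_zero.mp key).resolve_right hd
  · have key : (-((3:K)/4*(t + w)) ^ 3 * (4 / ((1 - 3*t) * (4 - 3*t)))
        - 3 * ((3:K)/4*(t + w)) ^ 2
        - (27*t*(1 - t) / ((1 - 3*t) * (4 - 3*t))) * ((3:K)/4*(t + w)) ^ 2
        + ((27:K)/4 * t * (1 - t) ^ 2) * (4 / ((1 - 3*t) * (4 - 3*t)))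
        + (27*t*(1 - t) / ((1 - 3*t) * (4 - 3*t))) * ((3:K)/4*(t + w)))
        * ((1 - 3*t) * (4 - 3*t)) = 0 := by
      linear_combination (-((3:K)/4*(t + w))^3 + (27:K)/4*t*(1 - t)^2) * hg0
        + (((3:K)/4*(t + w)) - ((3:K)/4*(t + w))^2) * hG1
        + ((-27:K)/16*w + (81:K)/16*t - 27/4) * hw
    exact (mul_eq_zero.mp key).resolve_right hd
end

section
/- With t the formal power series inverse of x = (27/4) t (1-t)^2 (zero constant term), for every N \ge 0 and j \ge 1, [x^N] 6/((1-3t)(4-3t)) * (2/(3(1-t)))^j = (4/27)^N * (2/3)^{j-1} * \sum_{i=0}^N (3/4)^{N-i} binom(2N+j+i, i). -/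
open PowerSeries

/-- Coefficient values of powers of `s = (1-t)⁻¹`. -/
def qq : ℕ → ℕ → ℚ
  | 0, _ => 1
  | (n+1), j => (4/27 : ℚ)^(n+1) * (j : ℚ) / ((3*n+3+j : ℕ) : ℚ) *
      (((3*n+3+j).choose (n+1) : ℕ) : ℚ)

lemma qq_zero (j : ℕ) : qq 0 j = 1 := rfl

lemma qq_succ (n j : ℕ) : qq (n+1) j =
    (4/27 : ℚ)^(n+1) * (j : ℚ) / ((3*n+3+j : ℕ) : ℚ) *
      (((3*n+3+j).choose (n+1) : ℕ) : ℚ) := rfl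

lemma nat_row (a k : ℕ) : (a+1).choose k * (a+1-k) = a.choose k * (a+1) := by
  have h1 := Nat.choose_succ_right_eq (a+1) k
  have h2 := Nat.add_one_mul_choose_eq a k
  rw [Nat.mul_comm (a.choose k) (a+1)]
  omega

lemma core_id (a b X Y : ℚ) (h6 : 3*a+b+6 ≠ 0) (h7 : 3*a+b+7 ≠ 0)
    (rel : X*(a+2) = Y*(2*a+b+5)) :
    (b+1)/(3*a+b+7)*(Y+X) = b/(3*a+b+6)*X + (b+3)/(3*a+b+6)*Y := by
  field_simp
  linear_combination (3 : ℚ) * rel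

lemma core2 (a b C2 C3 C4 : ℚ) (h3 : 3*a+b+3 ≠ 0) (h4 : 3*a+b+4 ≠ 0)
    (r1 : C3*(2*a+b+2) = C2*(3*a+b+3)) (r2 : C4*(2*a+b+3) = C3*(3*a+b+4)) :
    4*C4 - 12*C3 + 9*C2 = 3*b/(3*a+b+3)*C3 - 2*(b+1)/(3*a+b+4)*C4 := by
  field_simp
  linear_combination (-9*(3*a+b+4) : ℚ) * r1 + (6*(3*a+b+3) : ℚ) * r2

lemma qq_rec (n j : ℕ) : qq (n+1) (j+1) = qq (n+1) j + (4/27 : ℚ) * qq n (j+3) := by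
  cases n with
  | zero =>
    have h1 : ((j:ℚ)+4) ≠ 0 := by positivity
    have h2 : ((j:ℚ)+3) ≠ 0 := by positivity
    simp only [qq, Nat.choose_one_right]
    push_cast
    field_simp
    simp only [Nat.choose_one_right]
    push_cast
    ring
  | succ m =>
    simp only [qq]
    have e1 : 3*(m+1)+3+(j+1) = 3*m+j+7 := by omega
    have e2 : 3*(m+1)+3+j = 3*m+j+6 := by omega
    have e3 : 3*m+3+(j+3) = 3*m+j+6 := by omega
    rw [e1, e2, e3]
    have pas : (3*m+j+7).choose (m+2) = (3*m+j+6).choose (m+1) + (3*m+j+6).choose (m+2) := by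
      have h := Nat.choose_succ_succ' (3*m+j+6) (m+1)
      have e : 3*m+j+6+1 = 3*m+j+7 := by omega
      rw [e] at h
      exact h
    have rel : (3*m+j+6).choose (m+2) * (m+2) = (3*m+j+6).choose (m+1) * (2*m+j+5) := by
      have h := Nat.choose_succ_right_eq (3*m+j+6) (m+1)
      have e : 3*m+j+6 - (m+1) = 2*m+j+5 := by omega
      rw [e] at h
      exact h
    have pasQ : (((3*m+j+7).choose (m+2) : ℕ) : ℚ)
        = ((3*m+j+6).choose (m+1) : ℚ) + ((3*m+j+6).choose (m+2) : ℚ) := by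
      exact_mod_cast pas
    have relQ : ((3*m+j+6).choose (m+2) : ℚ) * ((m:ℚ)+2)
        = ((3*m+j+6).choose (m+1) : ℚ) * (2*(m:ℚ)+(j:ℚ)+5) := by
      exact_mod_cast rel
    have h7 : 3*(m:ℚ)+(j:ℚ)+7 ≠ 0 := by positivity
    have h6 : 3*(m:ℚ)+(j:ℚ)+6 ≠ 0 := by positivity
    have hcore := core_id (m:ℚ) (j:ℚ) _ _ h6 h7 relQ
    push_cast
    rw [pasQ]
    linear_combination ((4:ℚ)/27)^(m+2) * hcore


/-- key telescoping step (pure binomial/Pascal identity). -/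
lemma step_i (b i : ℕ) (k : ℕ) :
    (3/4 : ℚ)^(k+1) * ((b+2).choose i : ℚ) =
      9 * (3/4 : ℚ)^(k+1) * ((b).choose i : ℚ) +
      ((3/4 : ℚ)^k * (3 * ((b+3).choose (i+1) : ℚ) - 12 * ((b+2).choose (i+1) : ℚ)
          + 9 * ((b+1).choose (i+1) : ℚ))
        - (3/4 : ℚ)^(k+1) * (3 * ((b+2).choose i : ℚ) - 12 * ((b+1).choose i : ℚ)
          + 9 * ((b).choose i : ℚ))) := by
  have p1 : ((b+3).choose (i+1) : ℚ) = ((b+2).choose i : ℚ) + ((b+2).choose (i+1) : ℚ) := by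
    exact_mod_cast Nat.choose_succ_succ' (b+2) i
  have p2 : ((b+2).choose (i+1) : ℚ) = ((b+1).choose i : ℚ) + ((b+1).choose (i+1) : ℚ) := by
    exact_mod_cast Nat.choose_succ_succ' (b+1) i
  rw [p1, p2]
  ring

lemma Bstep (l N : ℕ) :
    ∑ i ∈ Finset.range (N+1+1), (3/4 : ℚ)^(N+1-i) * (((2*(N+1)+(l+1)+i).choose i : ℕ) : ℚ)
      = (27/4 : ℚ) * ∑ i ∈ Finset.range (N+1), (3/4 : ℚ)^(N-i) * (((2*N+(l+1)+i).choose i : ℕ) : ℚ)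
        + (4 * (((3*N+l+4).choose (N+1) : ℕ) : ℚ) - 12 * (((3*N+l+3).choose (N+1) : ℕ) : ℚ)
            + 9 * (((3*N+l+2).choose (N+1) : ℕ) : ℚ)) := by
  set Hf : ℕ → ℚ := fun i => (3/4 : ℚ)^(N+1-i) *
    (3 * ((2*N+l+3+i).choose i : ℚ) - 12 * ((2*N+l+2+i).choose i : ℚ)
      + 9 * ((2*N+l+1+i).choose i : ℚ)) with hHf
  have hstep : ∀ i ∈ Finset.range (N+1),
      (3/4 : ℚ)^(N+1-i) * (((2*(N+1)+(l+1)+i).choose i : ℕ) : ℚ)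
        = (27/4 : ℚ) * ((3/4 : ℚ)^(N-i) * (((2*N+(l+1)+i).choose i : ℕ) : ℚ))
          + (Hf (i+1) - Hf i) := by
    intro i hi
    have hiN : i ≤ N := by
      have := Finset.mem_range.mp hi
      omega
    have e0 : N+1-i = (N-i)+1 := by omega
    have e0' : N+1-(i+1) = N-i := by omega
    have ea : 2*(N+1)+(l+1)+i = 2*N+l+1+i+2 := by omega
    have eb : 2*N+(l+1)+i = 2*N+l+1+i := by omega
    have ec : 2*N+l+3+i = 2*N+l+1+i+2 := by omega
    have ed : 2*N+l+2+i = 2*N+l+1+i+1 := by omega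
    have ee : 2*N+l+3+(i+1) = 2*N+l+1+i+3 := by omega
    have ef : 2*N+l+2+(i+1) = 2*N+l+1+i+2 := by omega
    have eg : 2*N+l+1+(i+1) = 2*N+l+1+i+1 := by omega
    simp only [hHf, e0, e0', ea, eb, ec, ed, ee, ef, eg]
    have := step_i (2*N+l+1+i) i (N-i)
    linear_combination this
  rw [Finset.sum_range_succ, Finset.sum_congr rfl hstep, Finset.sum_add_distrib,
    Finset.sum_range_sub Hf, ← Finset.mul_sum]
  have hH0 : Hf 0 = 0 := by
    simp only [hHf, Nat.add_zero, Nat.choose_zero_right]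
    norm_num
  have hHN : Hf (N+1) = 3 * (((3*N+l+4).choose (N+1) : ℕ) : ℚ)
      - 12 * (((3*N+l+3).choose (N+1) : ℕ) : ℚ) + 9 * (((3*N+l+2).choose (N+1) : ℕ) : ℚ) := by
    simp only [hHf, Nat.sub_self, pow_zero, one_mul,
      show 2*N+l+3+(N+1) = 3*N+l+4 from by omega,
      show 2*N+l+2+(N+1) = 3*N+l+3 from by omega,
      show 2*N+l+1+(N+1) = 3*N+l+2 from by omega]
  have elast : 2*(N+1)+(l+1)+(N+1) = 3*N+l+4 := by omega
  rw [hH0, hHN, elast, Nat.sub_self, pow_zero, one_mul]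
  ring

lemma key2 (N l : ℕ) :
    (4/27 : ℚ)^(N+1) * (4 * (((3*N+l+4).choose (N+1) : ℕ) : ℚ)
        - 12 * (((3*N+l+3).choose (N+1) : ℕ) : ℚ) + 9 * (((3*N+l+2).choose (N+1) : ℕ) : ℚ))
      = 3 * qq (N+1) l - 2 * qq (N+1) (l+1) := by
  simp only [qq]
  have e1 : 3*N+3+l = 3*N+l+3 := by omega
  have e2 : 3*N+3+(l+1) = 3*N+l+4 := by omega
  rw [e1, e2]
  have r1 : (3*N+l+3).choose (N+1) * (2*N+l+2) = (3*N+l+2).choose (N+1) * (3*N+l+3) := by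
    have h := nat_row (3*N+l+2) (N+1)
    have e : 3*N+l+2+1 = 3*N+l+3 := by omega
    rw [e] at h
    have e' : 3*N+l+3-(N+1) = 2*N+l+2 := by omega
    rw [e'] at h
    exact h
  have r2 : (3*N+l+4).choose (N+1) * (2*N+l+3) = (3*N+l+3).choose (N+1) * (3*N+l+4) := by
    have h := nat_row (3*N+l+3) (N+1)
    have e : 3*N+l+3+1 = 3*N+l+4 := by omega
    rw [e] at h
    have e' : 3*N+l+4-(N+1) = 2*N+l+3 := by omega
    rw [e'] at h
    exact h
  have r1Q : ((3*N+l+3).choose (N+1) : ℚ) * (2*(N:ℚ)+(l:ℚ)+2)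
      = ((3*N+l+2).choose (N+1) : ℚ) * (3*(N:ℚ)+(l:ℚ)+3) := by exact_mod_cast r1
  have r2Q : ((3*N+l+4).choose (N+1) : ℚ) * (2*(N:ℚ)+(l:ℚ)+3)
      = ((3*N+l+3).choose (N+1) : ℚ) * (3*(N:ℚ)+(l:ℚ)+4) := by exact_mod_cast r2
  have h3 : 3*(N:ℚ)+(l:ℚ)+3 ≠ 0 := by positivity
  have h4 : 3*(N:ℚ)+(l:ℚ)+4 ≠ 0 := by positivity
  have hcore := core2 (N:ℚ) (l:ℚ) _ _ _ h3 h4 r1Q r2Q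
  push_cast
  linear_combination ((4:ℚ)/27)^(N+1) * hcore

lemma Lfinal (l N : ℕ) :
    ∑ k ∈ Finset.range (N+1), (3 * qq k l - 2 * qq k (l+1))
      = (4/27 : ℚ)^N *
          ∑ i ∈ Finset.range (N+1), (3/4 : ℚ)^(N-i) * (((2*N+(l+1)+i).choose i : ℕ) : ℚ) := by
  induction N with
  | zero => norm_num [qq]
  | succ N ih =>
    rw [Finset.sum_range_succ, ih, Bstep l N]
    have h2 := key2 N l
    ring_nf
    ring_nf at h2
    linarith [h2]

set_option maxHeartbeats 1000000 in
/-- With `t ∈ ℚ⟦x⟧`, `t(0) = 0`, `x = (27/4) t (1-t)²`: for all `N ≥ 0` and `j ≥ 1`,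
`[x^N] 6/((1-3t)(4-3t)) * (2/(3(1-t)))^j
  = (4/27)^N (2/3)^{j-1} ∑_{i=0}^N (3/4)^{N-i} C(2N+j+i, i)`. -/
theorem coeff_dual_model (t : PowerSeries ℚ)
    (h0 : PowerSeries.constantCoeff (R := ℚ) t = 0)
    (ht : PowerSeries.C (R := ℚ) (27 / 4) * t * (1 - t) ^ 2 = PowerSeries.X)
    (N j : ℕ) (hj : 1 ≤ j) :
    PowerSeries.coeff (R := ℚ) N
        (PowerSeries.C (R := ℚ) 6 * (((1 - 3 * t) * (4 - 3 * t))⁻¹) *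
          (PowerSeries.C (R := ℚ) (2 / 3) * (1 - t)⁻¹) ^ j) =
      (4 / 27 : ℚ) ^ N * (2 / 3 : ℚ) ^ (j - 1) *
        ∑ i ∈ Finset.range (N + 1),
          (3 / 4 : ℚ) ^ (N - i) * (Nat.choose (2 * N + j + i) i : ℚ) := by
  obtain ⟨l, rfl⟩ : ∃ l, j = l + 1 := ⟨j - 1, by omega⟩
  set s : ℚ⟦X⟧ := (1 - t)⁻¹ with hs
  have hne : constantCoeff (R := ℚ) (1 - t) ≠ 0 := by simp [h0]
  have hs1 : (1 - t) * s = 1 := PowerSeries.mul_inv_cancel _ hne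
  have h4 : (PowerSeries.C (R := ℚ) (4/27)) * X = t * (1-t)^2 := by
    rw [← ht]
    have hc : PowerSeries.C (R := ℚ) (4/27) * PowerSeries.C (R := ℚ) (27/4) = 1 := by
      rw [← map_mul]; norm_num
    calc PowerSeries.C (R := ℚ) (4/27) * (PowerSeries.C (R := ℚ) (27/4) * t * (1-t)^2)
        = (PowerSeries.C (R := ℚ) (4/27) * PowerSeries.C (R := ℚ) (27/4)) * (t * (1-t)^2) := by ring
      _ = t * (1-t)^2 := by rw [hc, one_mul]
  have hfe : s = 1 + PowerSeries.C (R := ℚ) (4/27) * X * s^3 := by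
    have key : PowerSeries.C (R := ℚ) (4/27) * X * s^3 = t * s := by
      calc PowerSeries.C (R := ℚ) (4/27) * X * s^3 = (t * (1-t)^2) * s^3 := by rw [h4]
        _ = ((1-t)*s)^2 * (t*s) := by ring
        _ = t * s := by rw [hs1]; ring
    rw [key]
    linear_combination hs1
  -- coefficients of powers of s
  have hq : ∀ n jj : ℕ, (PowerSeries.coeff (R := ℚ) n) (s ^ jj) = qq n jj := by
    intro n
    induction n using Nat.strong_induction_on with
    | _ n ih =>
      intro jj
      induction jj with
      | zero =>
        cases n with
        | zero => simp [qq]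
        | succ m => simp [qq, coeff_one]
      | succ jj ihj =>
        have hsj : s ^ (jj+1) = s ^ jj + PowerSeries.C (R := ℚ) (4/27) * (X * s ^ (jj+3)) := by
          have h3 : s^(jj+3) = s^jj * s^3 := by ring
          calc s^(jj+1) = s^jj * s := by ring
            _ = s^jj * (1 + PowerSeries.C (R := ℚ) (4/27) * X * s^3) := by rw [← hfe]
            _ = s^jj + PowerSeries.C (R := ℚ) (4/27) * (X * (s^jj * s^3)) := by ring
            _ = s^jj + PowerSeries.C (R := ℚ) (4/27) * (X * s^(jj+3)) := by rw [← h3]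
        rw [hsj, map_add, PowerSeries.coeff_C_mul, ihj]
        cases n with
        | zero =>
          rw [PowerSeries.coeff_zero_X_mul]
          simp [qq]
        | succ m =>
          rw [PowerSeries.coeff_succ_X_mul, ih m (Nat.lt_succ_self m), qq_rec]
  -- the inverse of 1 - X
  have hXne : constantCoeff (R := ℚ) (1 - X) ≠ 0 := by simp
  have hXinv : ((1 - X : ℚ⟦X⟧))⁻¹ * (1 - X) = 1 := PowerSeries.inv_mul_cancel _ hXne
  have hUne : constantCoeff (R := ℚ) ((1 - 3*t) * (4 - 3*t)) ≠ 0 := by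
    simp [h0, map_ofNat]
  have hX4 : ((1 : ℚ⟦X⟧) - 3*t)^2 * (4 - 3*t) = 4 * (1 - X) := by
    have h27 : (4 : ℚ⟦X⟧) * PowerSeries.C (R := ℚ) (27/4) = 27 := by
      rw [show (4 : ℚ⟦X⟧) = PowerSeries.C (R := ℚ) 4 from (map_ofNat _ 4).symm, ← map_mul,
        show (4:ℚ) * (27/4) = 27 by norm_num]
      exact map_ofNat _ 27
    linear_combination (-4 : ℚ⟦X⟧) * ht + (t*(1-t)^2) * h27
  have hinv : (((1:ℚ⟦X⟧) - 3*t) * (4 - 3*t))⁻¹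
      = PowerSeries.C (R := ℚ) (1/4) * (1 - 3*t) * (1 - X)⁻¹ := by
    rw [PowerSeries.inv_eq_iff_mul_eq_one hUne]
    have hC4 : PowerSeries.C (R := ℚ) (1/4) * 4 = 1 := by
      rw [show (4 : ℚ⟦X⟧) = PowerSeries.C (R := ℚ) 4 from (map_ofNat _ 4).symm, ← map_mul,
        show (1/4:ℚ) * 4 = 1 by norm_num, map_one]
    calc PowerSeries.C (R := ℚ) (1/4) * (1 - 3*t) * (1 - X)⁻¹ * ((1 - 3*t) * (4 - 3*t))
        = PowerSeries.C (R := ℚ) (1/4) * ((1 - X)⁻¹ * ((1 - 3*t)^2 * (4 - 3*t))) := by ring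
      _ = PowerSeries.C (R := ℚ) (1/4) * ((1 - X)⁻¹ * (4 * (1 - X))) := by rw [hX4]
      _ = PowerSeries.C (R := ℚ) (1/4) * 4 * ((1 - X)⁻¹ * (1 - X)) := by ring
      _ = 1 := by rw [hXinv, hC4, mul_one]
  have h3s : ((1:ℚ⟦X⟧) - 3*t) * s = PowerSeries.C (R := ℚ) 3 - PowerSeries.C (R := ℚ) 2 * s := by
    have e3 : (PowerSeries.C (R := ℚ) 3 : ℚ⟦X⟧) = 3 := map_ofNat _ 3
    have e2 : (PowerSeries.C (R := ℚ) 2 : ℚ⟦X⟧) = 2 := map_ofNat _ 2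
    rw [e3, e2]
    linear_combination (3 : ℚ⟦X⟧) * hs1
  have h3sl : ((1:ℚ⟦X⟧) - 3*t) * s^(l+1)
      = PowerSeries.C (R := ℚ) 3 * s^l - PowerSeries.C (R := ℚ) 2 * s^(l+1) := by
    calc ((1:ℚ⟦X⟧) - 3*t) * s^(l+1) = (((1:ℚ⟦X⟧) - 3*t) * s) * s^l := by ring
      _ = (PowerSeries.C (R := ℚ) 3 - PowerSeries.C (R := ℚ) 2 * s) * s^l := by rw [h3s]
      _ = PowerSeries.C (R := ℚ) 3 * s^l - PowerSeries.C (R := ℚ) 2 * s^(l+1) := by ring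
  have hconst : PowerSeries.C (R := ℚ) 6 * PowerSeries.C (R := ℚ) (1/4) * PowerSeries.C (R := ℚ) ((2/3 : ℚ)^(l+1))
      = PowerSeries.C (R := ℚ) ((2/3 : ℚ)^l) := by
    rw [← map_mul, ← map_mul]
    congr 1
    rw [pow_succ]
    ring
  have hG : PowerSeries.C (R := ℚ) 6 * (((1 - 3 * t) * (4 - 3 * t))⁻¹) *
        (PowerSeries.C (R := ℚ) (2 / 3) * s) ^ (l+1)
      = PowerSeries.C (R := ℚ) ((2/3 : ℚ)^l) *
          ((1 - X)⁻¹ * (PowerSeries.C (R := ℚ) 3 * s^l - PowerSeries.C (R := ℚ) 2 * s^(l+1))) := by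
    calc PowerSeries.C (R := ℚ) 6 * (((1 - 3 * t) * (4 - 3 * t))⁻¹) *
          (PowerSeries.C (R := ℚ) (2 / 3) * s) ^ (l+1)
        = PowerSeries.C (R := ℚ) 6 * (PowerSeries.C (R := ℚ) (1/4) * (1 - 3*t) * (1 - X)⁻¹) *
            (PowerSeries.C (R := ℚ) ((2/3 : ℚ)^(l+1)) * s^(l+1)) := by
          rw [hinv, mul_pow, ← map_pow]
      _ = (PowerSeries.C (R := ℚ) 6 * PowerSeries.C (R := ℚ) (1/4) * PowerSeries.C (R := ℚ) ((2/3 : ℚ)^(l+1))) *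
            ((1 - X)⁻¹ * (((1:ℚ⟦X⟧) - 3*t) * s^(l+1))) := by ring
      _ = PowerSeries.C (R := ℚ) ((2/3 : ℚ)^l) *
            ((1 - X)⁻¹ * (PowerSeries.C (R := ℚ) 3 * s^l - PowerSeries.C (R := ℚ) 2 * s^(l+1))) := by
          rw [hconst, h3sl]
  have hgeo : ((1 - X : ℚ⟦X⟧))⁻¹ = PowerSeries.mk (fun _ => (1:ℚ)) := by
    rw [PowerSeries.inv_eq_iff_mul_eq_one hXne]
    ext n
    cases n with
    | zero => simp
    | succ m => simp [mul_sub, map_sub, PowerSeries.coeff_succ_mul_X]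
  have hcoeff : ∀ g : ℚ⟦X⟧, PowerSeries.coeff (R := ℚ) N ((1 - X)⁻¹ * g)
      = ∑ k ∈ Finset.range (N+1), PowerSeries.coeff (R := ℚ) k g := by
    intro g
    rw [hgeo, PowerSeries.coeff_mul, Finset.Nat.sum_antidiagonal_eq_sum_range_succ_mk]
    simp only [PowerSeries.coeff_mk, one_mul]
    have := Finset.sum_range_reflect (fun k => PowerSeries.coeff (R := ℚ) k g) (N+1)
    simpa using this
  rw [hG, PowerSeries.coeff_C_mul, hcoeff]
  have hterm : ∀ k, PowerSeries.coeff (R := ℚ) k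
      (PowerSeries.C (R := ℚ) 3 * s^l - PowerSeries.C (R := ℚ) 2 * s^(l+1)) = 3 * qq k l - 2 * qq k (l+1) := by
    intro k
    rw [map_sub, PowerSeries.coeff_C_mul, PowerSeries.coeff_C_mul, hq, hq]
  rw [Finset.sum_congr rfl (fun k _ => hterm k), Lfinal l N]
  have : l + 1 - 1 = l := rfl
  rw [this]
  ring
end
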